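/- There exists an absolute constant c > 0 such that: (i) for every real u > 0 with u ≠ 1 and every (s,t) ∈ S_u one has |s| ≤ c and 0 < t ≤ c; and (ii) for all coprime positive integers a ≠ b and every real X > 0, the region R(X) is contained in [−c√X, c√X] × (0, c·√(X/|a² − b²|)]. -/

import Mathlib

open scoped Classical

open scoped Classical

/-- `p_u(s,t)`. -/
noncomputable def pForm (u s t : ℝ) : ℝ :=
  -2 * s ^ 2 - ((1 - u ^ 2) / |1 - u ^ 2|) * t ^ 2 +
    (4 / Real.sqrt |1 - u ^ 2|) * s * t

/-- `q_u(s,t)`. -/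
noncomputable def qForm (u s t : ℝ) : ℝ :=
  2 * s ^ 2 - ((1 - u ^ 2) / |1 - u ^ 2|) * t ^ 2

/-- `r_u(s,t)`. -/
noncomputable def rForm (u s t : ℝ) : ℝ :=
  2 * s ^ 2 - (2 * (1 - u ^ 2) / Real.sqrt |1 - u ^ 2|) * s * t +
    ((1 - u ^ 2) / |1 - u ^ 2|) * t ^ 2

/-- The region `S_u`. -/
noncomputable def Sregion (u : ℝ) : Set (ℝ × ℝ) :=
  {p | 0 < p.2 ∧ 0 < pForm u p.1 p.2 ∧ pForm u p.1 p.2 ≤ 1 ∧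
    0 < qForm u p.1 p.2 ∧ qForm u p.1 p.2 ≤ 1 ∧ 0 < rForm u p.1 p.2}

/-- `Q₁(s,t)` with real arguments. -/
noncomputable def Q1r (a b : ℤ) (s t : ℝ) : ℝ :=
  2 * s ^ 2 + ((a : ℝ) ^ 2 - (b : ℝ) ^ 2) * t ^ 2 - 4 * (a : ℝ) * s * t

/-- `Q₂(s,t)` with real arguments. -/
noncomputable def Q2r (a b : ℤ) (s t : ℝ) : ℝ :=
  -2 * s ^ 2 + ((a : ℝ) ^ 2 - (b : ℝ) ^ 2) * t ^ 2

/-- `Q₃(s,t)` with real arguments. -/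
noncomputable def Q3r (a b : ℤ) (s t : ℝ) : ℝ :=
  -2 * (a : ℝ) * s ^ 2 + 2 * ((a : ℝ) ^ 2 - (b : ℝ) ^ 2) * s * t -
    (a : ℝ) * ((a : ℝ) ^ 2 - (b : ℝ) ^ 2) * t ^ 2

/-- The region `R(X)`. -/
noncomputable def Rregion (a b : ℤ) (X : ℝ) : Set (ℝ × ℝ) :=
  {p | 0 < p.2 ∧ Q3r a b p.1 p.2 < 0 ∧
    -X ≤ Q1r a b p.1 p.2 ∧ Q1r a b p.1 p.2 < 0 ∧
    -X ≤ Q2r a b p.1 p.2 ∧ Q2r a b p.1 p.2 < 0}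

/-- The region `R′(X)`. -/
noncomputable def Rregion' (a b : ℤ) (X : ℝ) : Set (ℝ × ℝ) :=
  {p ∈ Rregion a b X | p.1 * (p.1 - (a : ℝ) * p.2) ≠ 0 ∧
    2 * (a : ℝ) * p.1 ≠ ((a : ℝ) ^ 2 - (b : ℝ) ^ 2) * p.2}


/-
In the indefinite cases (`u < 1`, resp. `a > b`) both regions lie in the set cut out by
`0 ≤ k s t - 2 s² - n t² ≤ X` and `0 ≤ 2 s² - n t² ≤ X` with `16 n ≤ k²`, taking
`n = 1, k = 4 / √(1 - u²), X = 1`, resp. `n = a² - b², k = 4 a`. There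
`(k s t)² ≥ 16 n s² t² ≥ 8 (n t²)²` while `k s t ≤ 2 X + 2 n t²`, which forces
`n t² ≤ (1 + √2) X`, and then `2 s² ≤ X + n t²`. In the definite cases `q_u ≤ 1`,
resp. `Q₂ ≥ -X`, already bounds `2 s² + |n| t²`.
-/

theorem sq_le_of_indefinite_bounds {s t n k X : ℝ} (hk : 16 * n ≤ k ^ 2)
    (h₁ : 0 ≤ k * s * t - 2 * s ^ 2 - n * t ^ 2) (h₁X : k * s * t - 2 * s ^ 2 - n * t ^ 2 ≤ X)
    (h₂ : 0 ≤ 2 * s ^ 2 - n * t ^ 2) (h₂X : 2 * s ^ 2 - n * t ^ 2 ≤ X) :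
    s ^ 2 ≤ 2 * X ∧ n * t ^ 2 ≤ 3 * X := by
  suffices hm : n * t ^ 2 ≤ 3 * X from ⟨by linarith, hm⟩
  by_contra! hm
  have hP : 0 ≤ k * s * t := by linarith
  have hPm : k * s * t < 8 / 3 * (n * t ^ 2) := by linarith
  have hPsq : 8 * (n * t ^ 2) ^ 2 ≤ (k * s * t) ^ 2 := calc
    8 * (n * t ^ 2) ^ 2 ≤ 16 * n * t ^ 2 * s ^ 2 := by nlinarith
    _ ≤ k ^ 2 * s ^ 2 * t ^ 2 := by nlinarith [mul_nonneg (sq_nonneg s) (sq_nonneg t)]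
    _ = (k * s * t) ^ 2 := by ring
  nlinarith [pow_lt_pow_left₀ hPm hP two_ne_zero]

theorem sq_le_of_mem_Sregion {u : ℝ} (hu : 0 < u) (hu1 : u ≠ 1) {p : ℝ × ℝ}
    (hp : p ∈ Sregion u) : p.1 ^ 2 ≤ 2 ∧ p.2 ^ 2 ≤ 3 := by
  obtain ⟨s, t⟩ := p
  obtain ⟨-, hp₀, hp₁, hq₀, hq₁, -⟩ := hp
  simp only [pForm, qForm] at hp₀ hp₁ hq₀ hq₁
  have hu2 : u ^ 2 ≠ 1 := by
    rwa [Ne, pow_eq_one_iff_of_nonneg hu.le two_ne_zero]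
  rcases lt_or_gt_of_ne (sub_ne_zero.2 hu2.symm) with hneg | hpos
  · rw [abs_of_neg hneg, div_neg_self hneg.ne] at hq₁
    constructor <;> nlinarith
  · rw [abs_of_pos hpos, div_self hpos.ne'] at hp₀ hp₁ hq₀ hq₁
    have hk : 16 * 1 ≤ (4 / √(1 - u ^ 2)) ^ 2 := by
      rw [div_pow, Real.sq_sqrt hpos.le, le_div_iff₀ hpos]
      nlinarith
    have := sq_le_of_indefinite_bounds hk (by linarith) (by linarith) (by linarith) hq₁
    constructor <;> linarith

theorem sq_le_of_mem_Rregion {a b : ℤ} {X : ℝ} {p : ℝ × ℝ} (hp : p ∈ Rregion a b X) :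
    p.1 ^ 2 ≤ 2 * X ∧ |(a : ℝ) ^ 2 - (b : ℝ) ^ 2| * p.2 ^ 2 ≤ 3 * X := by
  obtain ⟨s, t⟩ := p
  obtain ⟨-, -, h₁X, h₁, h₂X, h₂⟩ := hp
  simp only [Q1r, Q2r] at h₁X h₁ h₂X h₂
  rcases le_or_gt ((a : ℝ) ^ 2 - (b : ℝ) ^ 2) 0 with hN | hN
  · rw [abs_of_nonpos hN]
    constructor <;> nlinarith [mul_nonpos_of_nonpos_of_nonneg hN (sq_nonneg t)]
  · rw [abs_of_pos hN]
    have hk : 16 * ((a : ℝ) ^ 2 - (b : ℝ) ^ 2) ≤ (4 * (a : ℝ)) ^ 2 := by nlinarith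
    exact sq_le_of_indefinite_bounds hk (by linarith) (by linarith) (by linarith) (by linarith)

theorem abs_le_two_mul_sqrt_of_sq_le {x y : ℝ} (h : x ^ 2 ≤ 4 * y) : |x| ≤ 2 * √y := by
  have hy : 0 ≤ y := by nlinarith [sq_nonneg x]
  refine abs_le_of_sq_le_sq ?_ (by positivity)
  rwa [mul_pow, Real.sq_sqrt hy, show (2 : ℝ) ^ 2 = 4 by norm_num]

theorem Sregion_Rregion_bounded :
    ∃ c : ℝ, 0 < c ∧
      (∀ u : ℝ, 0 < u → u ≠ 1 → ∀ p ∈ Sregion u, |p.1| ≤ c ∧ 0 < p.2 ∧ p.2 ≤ c) ∧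
      (∀ a b : ℤ, 0 < a → 0 < b → Int.gcd a b = 1 → a ≠ b → ∀ X : ℝ, 0 < X →
        Rregion a b X ⊆
          Set.Icc (-(c * Real.sqrt X)) (c * Real.sqrt X) ×ˢ
            Set.Ioc 0 (c * Real.sqrt (X / |(a : ℝ) ^ 2 - (b : ℝ) ^ 2|))) := by
  refine ⟨2, two_pos, ?_, ?_⟩
  · intro u hu hu1 p hp
    obtain ⟨hs, ht⟩ := sq_le_of_mem_Sregion hu hu1 hp
    refine ⟨abs_le_of_sq_le_sq (by linarith) two_pos.le, hp.1, ?_⟩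
    exact (le_abs_self _).trans (abs_le_of_sq_le_sq (by linarith) two_pos.le)
  · rintro a b ha hb - hab X hX p hp
    have hN : 0 < |(a : ℝ) ^ 2 - (b : ℝ) ^ 2| := by
      rw [abs_pos, sub_ne_zero, Ne, sq_eq_sq₀ (by positivity) (by positivity)]
      exact_mod_cast hab
    obtain ⟨hs, ht⟩ := sq_le_of_mem_Rregion hp
    refine ⟨abs_le.1 (abs_le_two_mul_sqrt_of_sq_le (by linarith)), hp.1, ?_⟩
    refine (le_abs_self _).trans (abs_le_two_mul_sqrt_of_sq_le ?_)
    rw [← mul_div_assoc, le_div_iff₀ hN, mul_comm]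
    linarith
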